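/- Let HS1(t) = (1+t^2)*(1 + 17t^2 + 48t^4 + 17t^6 + t^8)/(1-t^2)^10 and HS4(t) = (1 + 10t^2 + 55t^4 + 150t^6 + 288t^8 + 336t^10 + 288t^12 + 150t^14 + 55t^16 + 10t^18 + t^20)/((1-t^2)^10 (1+t^2)^5). Then lim_{t->1} HS1(t)/HS4(t) = 4. -/

import Mathlib

open Filter Topology

/-!
Both series have the pole `(1 - t^2)^10` at `t = 1`; cancelling it leaves
`(1 + t^2)^6 (1 + 17t^2 + 48t^4 + 17t^6 + t^8) / N(t)` with `N` the numerator of `HS4`, a function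
continuous at `1` since `N > 0`, whose value there is `2^6 · 84 / 1344 = 4`.
-/

lemma div_div_div_mul_cancel {K : Type*} [Field K] {d : K} (hd : d ≠ 0) (a b e : K) :
    a / d / (b / (d * e)) = a * e / b := by
  rw [div_mul_eq_div_div_swap, div_div_div_cancel_right₀ hd, div_div_eq_mul_div]

lemma tendsto_div_div_mul_of_common_pole {X K : Type*} [TopologicalSpace X] [Field K]
    [TopologicalSpace K] [IsTopologicalDivisionRing K] {a b d e : X → K} {x : X}
    (ha : ContinuousAt a x) (hb : ContinuousAt b x) (he : ContinuousAt e x) (hbx : b x ≠ 0)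
    (hd : ∀ᶠ t in 𝓝[≠] x, d t ≠ 0) :
    Tendsto (fun t => a t / d t / (b t / (d t * e t))) (𝓝[≠] x) (𝓝 (a x * e x / b x)) :=
  ((ha.mul he).div hb hbx).tendsto.mono_left nhdsWithin_le_nhds |>.congr'
    (hd.mono fun _ ht => (div_div_div_mul_cancel ht _ _ _).symm)

lemma eventually_one_sub_sq_ne_zero : ∀ᶠ t in 𝓝[≠] (1 : ℝ), 1 - t ^ 2 ≠ 0 := by
  filter_upwards [nhdsWithin_le_nhds (eventually_gt_nhds one_pos), self_mem_nhdsWithin]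
    with t ht_pos ht_ne
  rw [show 1 - t ^ 2 = (1 - t) * (1 + t) by ring]
  exact mul_ne_zero (sub_ne_zero.2 (Ne.symm ht_ne)) (by positivity)

theorem volume_ratio_D4_P22 :
    Tendsto (fun t : ℝ =>
        ((1 + t^2) * (1 + 17*t^2 + 48*t^4 + 17*t^6 + t^8) / (1 - t^2)^10) /
        ((1 + 10*t^2 + 55*t^4 + 150*t^6 + 288*t^8 + 336*t^10 + 288*t^12
            + 150*t^14 + 55*t^16 + 10*t^18 + t^20) /
          ((1 - t^2)^10 * (1 + t^2)^5)))
      (nhdsWithin 1 {(1 : ℝ)}ᶜ) (nhds 4) := by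
  have h := tendsto_div_div_mul_of_common_pole
    (a := fun t : ℝ => (1 + t^2) * (1 + 17*t^2 + 48*t^4 + 17*t^6 + t^8))
    (b := fun t : ℝ => 1 + 10*t^2 + 55*t^4 + 150*t^6 + 288*t^8 + 336*t^10 + 288*t^12
            + 150*t^14 + 55*t^16 + 10*t^18 + t^20)
    (d := fun t : ℝ => (1 - t^2)^10) (e := fun t : ℝ => (1 + t^2)^5)
    (by fun_prop) (by fun_prop) (by fun_prop) (by norm_num)
    (eventually_one_sub_sq_ne_zero.mono fun _ ht => pow_ne_zero 10 ht)
  norm_num at h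
  exact h
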